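/- arXiv:1209.5793 — 2 statements merged into one kernel-verified Lean document; each statement's English description precedes it below -/
import Mathlib

section
/- For an integer r > 1, define d(r) to be the greatest common divisor of the binomial coefficients C(r,i) for 0 < i < r. Then d(r) = p if r = p^k is a power of a prime p (with k ≥ 1), and d(r) = 1 otherwise. -/
open Nat Finset

/-- Iterated Lucas: `C(q^a * m, q^a) ≡ m (mod q)`. -/
lemma lucas_pow_mul (q : ℕ) [Fact q.Prime] (a m : ℕ) :
    (q ^ a * m).choose (q ^ a) ≡ m [MOD q] := by
  induction a with
  | zero => simpa using Nat.ModEq.refl m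
  | succ a ih =>
    have hq : 0 < q := (Fact.out : q.Prime).pos
    have h := Choose.choose_modEq_choose_mod_mul_choose_div_nat
      (p := q) (n := q ^ (a + 1) * m) (k := q ^ (a + 1))
    have h1 : q ^ (a + 1) % q = 0 := by
      simp [pow_succ, Nat.mul_mod_left]
    have h2 : (q ^ (a + 1) * m) % q = 0 := by
      rw [pow_succ, mul_comm (q ^ a) q, mul_assoc]; exact Nat.mul_mod_right q _
    have h3 : q ^ (a + 1) / q = q ^ a := by
      rw [pow_succ, Nat.mul_div_cancel _ hq]
    have h4 : q ^ (a + 1) * m / q = q ^ a * m := by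
      rw [pow_succ, mul_right_comm, Nat.mul_div_cancel _ hq]
    rw [h1, h2, h3, h4] at h
    have := h.trans ((Nat.ModEq.refl (Nat.choose 0 0)).mul ih)
    simpa using this

/-- The p-adic valuation of `C(p^k, p^(k-1))` is 1, so `p^2` does not divide it. -/
lemma sq_not_dvd_choose (p k : ℕ) (hp : p.Prime) (hk : 1 ≤ k) :
    ¬ p ^ 2 ∣ (p ^ k).choose (p ^ (k - 1)) := by
  have hlt : p ^ (k - 1) < p ^ k := Nat.pow_lt_pow_right hp.one_lt (by omega)
  have hval : emultiplicity p ((p ^ k).choose (p ^ (k - 1))) = (1 : ℕ) := by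
    rw [hp.emultiplicity_choose_prime_pow hlt.le (pow_pos hp.pos _).ne']
    have hm : multiplicity p (p ^ (k - 1)) = k - 1 :=
      multiplicity_pow_self hp.pos.ne' (by simpa [Nat.isUnit_iff] using hp.ne_one) _
    rw [hm]
    congr 1
    omega
  intro hdvd
  have := le_emultiplicity_of_pow_dvd hdvd
  rw [hval] at this
  exact absurd (by exact_mod_cast this) (by omega)

/-- For `r > 1`, the gcd `d(r)` of the binomial coefficients `C(r,i)`, `0 < i < r`,
equals `p` when `r = p^k` is a prime power (`k ≥ 1`) and equals `1` otherwise. -/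
theorem stmt0 (r : ℕ) (hr : 1 < r) :
    (∀ p k : ℕ, p.Prime → 1 ≤ k → r = p ^ k →
      ((Finset.Ioo 0 r).gcd fun i => r.choose i) = p) ∧
    ((¬ ∃ p k : ℕ, p.Prime ∧ 1 ≤ k ∧ r = p ^ k) →
      ((Finset.Ioo 0 r).gcd fun i => r.choose i) = 1) := by
  have h1mem : 1 ∈ Finset.Ioo 0 r := Finset.mem_Ioo.mpr ⟨zero_lt_one, hr⟩
  have hdr : ((Finset.Ioo 0 r).gcd fun i => r.choose i) ∣ r := by
    have := Finset.gcd_dvd (f := fun i => r.choose i) h1mem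
    simpa using this
  constructor
  · intro p k hp hk hrk
    subst hrk
    have hpd : p ∣ (Finset.Ioo 0 (p ^ k)).gcd fun i => (p ^ k).choose i := by
      apply Finset.dvd_gcd
      intro i hi
      rw [Finset.mem_Ioo] at hi
      exact Nat.Prime.dvd_choose_pow hp hi.1.ne' hi.2.ne
    obtain ⟨j, hjk, hdj⟩ := (Nat.dvd_prime_pow hp).mp hdr
    have hmem : p ^ (k - 1) ∈ Finset.Ioo 0 (p ^ k) :=
      Finset.mem_Ioo.mpr ⟨pow_pos hp.pos _, Nat.pow_lt_pow_right hp.one_lt (by omega)⟩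
    have hdc : ((Finset.Ioo 0 (p ^ k)).gcd fun i => (p ^ k).choose i) ∣
        (p ^ k).choose (p ^ (k - 1)) := Finset.gcd_dvd hmem
    have hj1 : j ≤ 1 := by
      by_contra hj2
      exact sq_not_dvd_choose p k hp hk
        ((pow_dvd_pow p (by omega)).trans (hdj ▸ hdc))
    have hj0 : j ≠ 0 := by
      rintro rfl
      rw [hdj, pow_zero] at hpd
      exact hp.one_lt.ne' (Nat.eq_one_of_dvd_one hpd)
    have : j = 1 := by omega
    rw [hdj, this, pow_one]
  · intro hnp
    rw [Nat.eq_one_iff_not_exists_prime_dvd]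
    intro q hq hqd
    haveI : Fact q.Prime := ⟨hq⟩
    have hqr : q ∣ r := hqd.trans hdr
    set a := r.factorization q with ha
    have ha1 : 1 ≤ a := hq.factorization_pos_of_dvd (by omega) hqr
    set m := r / q ^ a with hm
    have hrm : q ^ a * m = r := Nat.ordProj_mul_ordCompl_eq_self r q
    have hqm : ¬ q ∣ m := Nat.not_dvd_ordCompl hq (by omega)
    have hm1 : m ≠ 1 := fun h => hnp ⟨q, a, hq, ha1, by rw [← hrm, h, mul_one]⟩
    have hm0 : m ≠ 0 := by
      intro h; rw [h, mul_zero] at hrm; omega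
    have hqa_mem : q ^ a ∈ Finset.Ioo 0 r := by
      rw [Finset.mem_Ioo]
      refine ⟨pow_pos hq.pos _, ?_⟩
      rw [← hrm]
      exact (Nat.lt_mul_iff_one_lt_right (pow_pos hq.pos a)).mpr (Nat.lt_of_le_of_ne (Nat.one_le_iff_ne_zero.mpr hm0) (Ne.symm hm1))
    have hqc : q ∣ r.choose (q ^ a) := hqd.trans (Finset.gcd_dvd hqa_mem)
    have hmod : (q ^ a * m).choose (q ^ a) ≡ m [MOD q] := lucas_pow_mul q a m
    rw [hrm] at hmod
    have : q ∣ m := by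
      have := hmod.symm.trans (Nat.modEq_zero_iff_dvd.mpr hqc)
      exact (Nat.modEq_zero_iff_dvd).mp this
    exact hqm this
end

section
/- Let F ∈ A[[x,y]] and G ∈ B[[x,y]] be commutative formal group laws over commutative rings A and B, let φ: A → B be a ring homomorphism, and let γ ∈ B[[x]] have zero constant term and satisfy φ(F)(γ(x), γ(y)) = γ(G(x, y)) in B[[x,y]]. If the linear coefficient of γ is zero and γ ≠ 0, then the lowest-degree nonzero coefficient b of γ, occurring in some degree r > 1, satisfies d(r)·b = 0, where d(r) = gcd{ C(r,i) : 0 < i < r }. -/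
/-!
Let `r` be the order of `γ` and `b = γ_r`, and compare coefficients of `x^i y^(r-i)`,
`0 < i < r`, in `φ(F)(γ(x), γ(y)) = γ(G(x, y))`. On the left, each monomial `x^a y^c` of `F`
contributes `γ(x)^a γ(y)^c`, which is a series in `y` alone, in `x` alone, or of order
`≥ 2r`; so the coefficient vanishes. On the right only `b G^r` contributes in degree `r`, and
`G ≡ x + y` modulo degree 2 gives the coefficient `C(r, i) b`. Hence every `C(r, i)` kills `b`,
and so does their gcd.
-/

/-- Substitution of a power series `g` (intended with zero constant term) into a
one-variable power series `γ`: the coefficient at `d` of `γ(g)` is the (exact, when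
`g` has zero constant term) truncated sum `∑_{n ≤ |d|} γ_n · coeff d (g^n)`. -/
noncomputable def psSubst {B : Type*} [CommRing B] {σ : Type*} (g : MvPowerSeries σ B)
    (γ : PowerSeries B) : MvPowerSeries σ B :=
  fun d => ∑ n ∈ Finset.range ((d.sum fun _ m => m) + 1),
    PowerSeries.coeff n γ * MvPowerSeries.coeff d (g ^ n)

/-- Substitution of a `k`-tuple of power series (intended with zero constant terms)
into a `k`-variable power series `F`, applying `φ` to the coefficients of `F`. -/
noncomputable def mvSubst {A B : Type*} [CommRing A] [CommRing B] {k : ℕ} {σ : Type*}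
    (φ : A →+* B) (g : Fin k → MvPowerSeries σ B) (F : MvPowerSeries (Fin k) A) :
    MvPowerSeries σ B :=
  fun d => ∑ e ∈ Finset.Icc (0 : Fin k →₀ ℕ)
      (Finsupp.equivFunOnFinite.symm (Function.const (Fin k) (d.sum fun _ m => m))),
    φ (MvPowerSeries.coeff e F) * MvPowerSeries.coeff d (∏ i, g i ^ e i)

/-- A (one-dimensional, commutative) formal group law `F ∈ A[[x,y]]`. -/
structure IsFGL {A : Type*} [CommRing A] (F : MvPowerSeries (Fin 2) A) : Prop where
  zero_right : mvSubst (RingHom.id A) ![MvPowerSeries.X 0, 0] F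
      = (MvPowerSeries.X 0 : MvPowerSeries (Fin 2) A)
  zero_left : mvSubst (RingHom.id A) ![0, MvPowerSeries.X 1] F
      = (MvPowerSeries.X 1 : MvPowerSeries (Fin 2) A)
  comm : mvSubst (RingHom.id A) ![MvPowerSeries.X 1, MvPowerSeries.X 0] F = F
  assoc : mvSubst (RingHom.id A)
        ![mvSubst (RingHom.id A) ![MvPowerSeries.X 0, MvPowerSeries.X 1] F,
          (MvPowerSeries.X 2 : MvPowerSeries (Fin 3) A)] F
      = mvSubst (RingHom.id A)
        ![(MvPowerSeries.X 0 : MvPowerSeries (Fin 3) A),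
          mvSubst (RingHom.id A) ![MvPowerSeries.X 1, MvPowerSeries.X 2] F] F

/-- A homomorphism of formal group laws `(A,F) → (B,G)`: a ring map `φ` and a power
series `γ` with zero constant term with `φ(F)(γ(x),γ(y)) = γ(G(x,y))`. -/
structure IsFGLHom {A B : Type*} [CommRing A] [CommRing B] (F : MvPowerSeries (Fin 2) A)
    (G : MvPowerSeries (Fin 2) B) (φ : A →+* B) (γ : PowerSeries B) : Prop where
  const : PowerSeries.constantCoeff γ = 0
  hom : mvSubst φ ![psSubst (MvPowerSeries.X 0) γ, psSubst (MvPowerSeries.X 1) γ] F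
      = psSubst G γ

open MvPowerSeries Finsupp

section

variable {A B : Type*} [CommRing A] [CommRing B] {σ : Type*}

lemma Finsupp.degree_fin_two (d : Fin 2 →₀ ℕ) : d.degree = d 0 + d 1 := by
  rw [degree_eq_sum, Fin.sum_univ_two]

lemma Finsupp.eq_single_zero_add_single_one (d : Fin 2 →₀ ℕ) :
    d = single 0 (d 0) + single 1 (d 1) := by
  ext i; fin_cases i <;> simp

lemma MvPowerSeries.homogeneousComponent_pow_of_constantCoeff_eq_zero {R : Type*} [Semiring R]
    {f : MvPowerSeries σ R} (hf : constantCoeff f = 0) (n : ℕ) :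
    homogeneousComponent n (f ^ n) = homogeneousComponent 1 f ^ n := by
  induction n with
  | zero =>
    classical
    ext d
    rw [pow_zero, pow_zero, coeff_homogeneousComponent, coeff_one]
    split_ifs <;> simp_all [degree_eq_zero_iff]
  | succ n ih =>
    rw [pow_succ, pow_succ, ← ih, homogeneousComponent_mul_of_le_order
      (le_order_pow_of_constantCoeff_eq_zero n hf) (one_le_order_iff_constCoeff_eq_zero.2 hf)]

lemma MvPowerSeries.coeff_X_zero_add_X_one_pow {R : Type*} [CommSemiring R] {n : ℕ}
    {d : Fin 2 →₀ ℕ} (hd : d.degree = n) :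
    coeff d ((X 0 + X 1 : MvPowerSeries (Fin 2) R) ^ n) = n.choose (d 0) := by
  rw [degree_fin_two] at hd
  simp only [add_pow, map_sum, X_pow_eq, monomial_mul_monomial, one_mul, ← map_natCast C,
    coeff_mul_C, coeff_monomial]
  rw [Finset.sum_eq_single (d 0)]
  · have hd1 : n - d 0 = d 1 := by omega
    rw [if_pos (by rw [hd1]; exact d.eq_single_zero_add_single_one), one_mul]
  · intro k _ hk
    rw [if_neg fun h => hk (by simp [h]), zero_mul]
  · intro h
    exact absurd (Finset.mem_range.2 (by omega)) h

lemma MvPowerSeries.IsWeightedHomogeneous.pow {R : Type*} [Semiring R] {w : σ → ℕ}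
    {f : MvPowerSeries σ R} {p : ℕ} (hf : f.IsWeightedHomogeneous w p) (n : ℕ) :
    (f ^ n).IsWeightedHomogeneous w (n * p) := by
  induction n with
  | zero =>
    classical
    intro d hd
    rw [pow_zero, coeff_one, ne_eq, ite_eq_right_iff, not_forall] at hd
    obtain ⟨rfl, -⟩ := hd
    simp
  | succ n ih => rw [pow_succ, Nat.succ_mul]; exact ih.mul hf

lemma MvPowerSeries.le_order_pow_of_le_order {R : Type*} [Semiring R] {f : MvPowerSeries σ R}
    {n : ℕ∞} (h : n ≤ f.order) {a : ℕ} (ha : a ≠ 0) : n ≤ (f ^ a).order := by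
  obtain ⟨b, rfl⟩ := Nat.exists_eq_succ_of_ne_zero ha
  rw [pow_succ]
  exact h.trans (le_add_self.trans le_order_mul)

lemma coeff_psSubst (g : MvPowerSeries σ B) (γ : PowerSeries B) (d : σ →₀ ℕ) :
    coeff d (psSubst g γ) =
      ∑ n ∈ Finset.range (d.degree + 1), PowerSeries.coeff n γ * coeff d (g ^ n) :=
  rfl

lemma exists_eq_single_of_coeff_psSubst_X_ne_zero {γ : PowerSeries B} {s : σ} {d : σ →₀ ℕ}
    (h : coeff d (psSubst (X s) γ) ≠ 0) : ∃ k, d = single s k ∧ PowerSeries.coeff k γ ≠ 0 := by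
  classical
  rw [coeff_psSubst] at h
  obtain ⟨k, -, hk⟩ := Finset.exists_ne_zero_of_sum_ne_zero h
  rw [coeff_X_pow] at hk
  split_ifs at hk with hd
  · exact ⟨k, hd, by simpa using hk⟩
  · simp at hk

lemma isWeightedHomogeneous_psSubst_X [DecidableEq σ] (γ : PowerSeries B) {s t : σ}
    (hts : t ≠ s) : (psSubst (X s) γ).IsWeightedHomogeneous (Pi.single t 1) 0 := fun hd => by
  obtain ⟨k, rfl, -⟩ := exists_eq_single_of_coeff_psSubst_X_ne_zero hd
  rw [weight_single_one_apply, single_eq_of_ne hts]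

lemma le_order_psSubst_X {γ : PowerSeries B} {r : ℕ} (hγ : ∀ m < r, PowerSeries.coeff m γ = 0)
    (s : σ) : (r : ℕ∞) ≤ (psSubst (X s) γ).order :=
  le_order fun d hd => by
    by_contra h
    obtain ⟨k, rfl, hk⟩ := exists_eq_single_of_coeff_psSubst_X_ne_zero h
    exact hk (hγ k (by simpa using hd))

lemma mem_Icc_zero_const_iff {ι : Type*} [Fintype ι] [DecidableEq ι] (e : ι →₀ ℕ) (n : ℕ) :
    e ∈ Finset.Icc 0 (equivFunOnFinite.symm (Function.const ι n)) ↔ ∀ i, e i ≤ n := by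
  simp [Finsupp.le_def]

lemma coeff_mvSubst_pair (φ : A →+* B) (g₀ g₁ : MvPowerSeries σ B)
    (F : MvPowerSeries (Fin 2) A) (d : σ →₀ ℕ) :
    coeff d (mvSubst φ ![g₀, g₁] F) =
      ∑ e ∈ Finset.Icc 0 (equivFunOnFinite.symm (Function.const (Fin 2) d.degree)),
        φ (coeff e F) * coeff d (g₀ ^ e 0 * g₁ ^ e 1) := by
  refine Finset.sum_congr rfl fun e _ => ?_
  simp [Fin.prod_univ_two]

lemma coeff_single_mvSubst_X_zero [DecidableEq σ] (φ : A →+* B) (F : MvPowerSeries (Fin 2) A)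
    (s : σ) (m : ℕ) :
    coeff (single s m) (mvSubst φ ![X s, 0] F) = φ (coeff (single 0 m) F) := by
  rw [coeff_mvSubst_pair, Finset.sum_eq_single (single 0 m)]
  · simp [coeff_X_pow]
  · intro e _ he
    rcases eq_or_ne (e 1) 0 with h1 | h1
    · have : e 0 ≠ m := fun h => he (by ext i; fin_cases i <;> simp [h, h1])
      simp [h1, coeff_X_pow, (single_injective s).ne this.symm]
    · simp [zero_pow h1]
  · intro h
    exact absurd ((mem_Icc_zero_const_iff _ _).2 fun i => by fin_cases i <;> simp) h

lemma coeff_single_mvSubst_zero_X [DecidableEq σ] (φ : A →+* B) (F : MvPowerSeries (Fin 2) A)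
    (s : σ) (m : ℕ) :
    coeff (single s m) (mvSubst φ ![0, X s] F) = φ (coeff (single 1 m) F) := by
  rw [coeff_mvSubst_pair, Finset.sum_eq_single (single 1 m)]
  · simp [coeff_X_pow]
  · intro e _ he
    rcases eq_or_ne (e 0) 0 with h0 | h0
    · have : e 1 ≠ m := fun h => he (by ext i; fin_cases i <;> simp [h, h0])
      simp [h0, coeff_X_pow, (single_injective s).ne this.symm]
    · simp [zero_pow h0]
  · intro h
    exact absurd ((mem_Icc_zero_const_iff _ _).2 fun i => by fin_cases i <;> simp) h

lemma coeff_mvSubst_psSubst_X_eq_zero (φ : A →+* B) (F : MvPowerSeries (Fin 2) A)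
    {γ : PowerSeries B} {r : ℕ} (hγ : ∀ m < r, PowerSeries.coeff m γ = 0) {d : Fin 2 →₀ ℕ}
    (h0 : d 0 ≠ 0) (h1 : d 1 ≠ 0) (hd : d.degree < 2 * r) :
    coeff d (mvSubst φ ![psSubst (X 0) γ, psSubst (X 1) γ] F) = 0 := by
  rw [coeff_mvSubst_pair]
  refine Finset.sum_eq_zero fun e _ => mul_eq_zero_of_right _ ?_
  rcases eq_or_ne (e 0) 0 with he0 | he0
  · rw [he0, pow_zero, one_mul]
    refine IsWeightedHomogeneous.coeff_eq_zero
      (IsWeightedHomogeneous.pow (isWeightedHomogeneous_psSubst_X γ zero_ne_one) (e 1)) ?_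
    rwa [weight_single_one_apply, mul_zero]
  rcases eq_or_ne (e 1) 0 with he1 | he1
  · rw [he1, pow_zero, mul_one]
    refine IsWeightedHomogeneous.coeff_eq_zero
      (IsWeightedHomogeneous.pow (isWeightedHomogeneous_psSubst_X γ one_ne_zero) (e 0)) ?_
    rwa [weight_single_one_apply, mul_zero]
  refine coeff_of_lt_order (lt_of_lt_of_le ?_ (le_trans (add_le_add
    (le_order_pow_of_le_order (le_order_psSubst_X hγ 0) he0)
    (le_order_pow_of_le_order (le_order_psSubst_X hγ 1) he1)) le_order_mul))
  exact_mod_cast (by omega : d.degree < r + r)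

namespace IsFGL

variable {F : MvPowerSeries (Fin 2) A}

lemma coeff_single_zero (hF : IsFGL F) (m : ℕ) :
    coeff (single 0 m) F = coeff (single 0 m) (X 0 : MvPowerSeries (Fin 2) A) := by
  rw [← hF.zero_right, coeff_single_mvSubst_X_zero, RingHom.id_apply]

lemma coeff_single_one (hF : IsFGL F) (m : ℕ) :
    coeff (single 1 m) F = coeff (single 1 m) (X 1 : MvPowerSeries (Fin 2) A) := by
  rw [← hF.zero_left, coeff_single_mvSubst_zero_X, RingHom.id_apply]

lemma constantCoeff_eq_zero (hF : IsFGL F) : constantCoeff F = 0 := by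
  simpa [coeff_X, eq_comm (a := (0 : Fin 2 →₀ ℕ))] using hF.coeff_single_zero 0

lemma homogeneousComponent_one (hF : IsFGL F) : homogeneousComponent 1 F = X 0 + X 1 := by
  ext d
  rw [coeff_homogeneousComponent]
  split_ifs with hd
  · rw [degree_fin_two] at hd
    rcases (by omega : d 0 = 1 ∧ d 1 = 0 ∨ d 0 = 0 ∧ d 1 = 1) with ⟨h0, h1⟩ | ⟨h0, h1⟩
    all_goals rw [d.eq_single_zero_add_single_one, h0, h1]
    · simp [hF.coeff_single_zero, coeff_X, single_eq_single_iff]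
    · simp [hF.coeff_single_one, coeff_X, single_eq_single_iff]
  · simp only [map_add, coeff_X]
    split_ifs <;> simp_all

lemma coeff_pow (hF : IsFGL F) {n : ℕ} {d : Fin 2 →₀ ℕ} (hd : d.degree = n) :
    coeff d (F ^ n) = n.choose (d 0) := by
  rw [← coeff_X_zero_add_X_one_pow hd, ← hF.homogeneousComponent_one,
    ← homogeneousComponent_pow_of_constantCoeff_eq_zero hF.constantCoeff_eq_zero,
    coeff_homogeneousComponent, if_pos hd]

lemma coeff_psSubst_of_lt_eq_zero (hF : IsFGL F) {γ : PowerSeries A} {r : ℕ}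
    (hγ : ∀ m < r, PowerSeries.coeff m γ = 0) {d : Fin 2 →₀ ℕ} (hd : d.degree = r) :
    coeff d (psSubst F γ) = PowerSeries.coeff r γ * r.choose (d 0) := by
  rw [coeff_psSubst, hd, Finset.sum_eq_single r, hF.coeff_pow hd]
  · intro n hn hne
    rw [hγ n (by have := Finset.mem_range.1 hn; omega), zero_mul]
  · intro h
    exact absurd (Finset.mem_range.2 r.lt_succ_self) h

end IsFGL

end

theorem stmt4_general {A B : Type*} [CommRing A] [CommRing B]
    (F : MvPowerSeries (Fin 2) A) (G : MvPowerSeries (Fin 2) B)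
    (hG : IsFGL G) (φ : A →+* B) (γ : PowerSeries B)
    (hhom : IsFGLHom F G φ γ)
    (h1 : PowerSeries.coeff 1 γ = 0) (hγ : γ ≠ 0) :
    ∃ r : ℕ, 1 < r ∧ (∀ m < r, PowerSeries.coeff m γ = 0) ∧
      PowerSeries.coeff r γ ≠ 0 ∧
      ((Finset.Ioo 0 r).gcd fun i => r.choose i) • PowerSeries.coeff r γ = 0 := by
  classical
  have hex : ∃ n, PowerSeries.coeff n γ ≠ 0 := by
    by_contra! h
    exact hγ (PowerSeries.ext fun n => by simp [h n])
  set r := Nat.find hex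
  have hlow : ∀ m < r, PowerSeries.coeff m γ = 0 := fun m hm => not_not.1 (Nat.find_min hex hm)
  have hr : 1 < r := (Nat.lt_find_iff hex 1).2 fun m hm => by
    interval_cases m
    · simpa using hhom.const
    · simpa using h1
  refine ⟨r, hr, hlow, Nat.find_spec hex, addOrderOf_dvd_iff_nsmul_eq_zero.1
    (Finset.dvd_gcd fun i hi => addOrderOf_dvd_iff_nsmul_eq_zero.2 ?_)⟩
  obtain ⟨hi0, hir⟩ := Finset.mem_Ioo.1 hi
  set d : Fin 2 →₀ ℕ := single 0 i + single 1 (r - i)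
  have hd : d.degree = r := by rw [map_add, degree_single, degree_single]; omega
  have hcoeff := congrArg (coeff d) hhom.hom
  rw [coeff_mvSubst_psSubst_X_eq_zero φ F hlow (by simp [d]; omega) (by simp [d]; omega)
    (by omega), hG.coeff_psSubst_of_lt_eq_zero hlow hd] at hcoeff
  simpa [d, nsmul_eq_mul, mul_comm] using hcoeff.symm

/-- If `(φ,γ)` is a homomorphism of formal group laws with vanishing linear coefficient
and `γ ≠ 0`, then the lowest-degree nonzero coefficient `b` of `γ`, occurring in some
degree `r > 1`, satisfies `d(r)·b = 0` where `d(r) = gcd{C(r,i) : 0 < i < r}`. -/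
theorem stmt4 {A B : Type*} [CommRing A] [CommRing B]
    (F : MvPowerSeries (Fin 2) A) (G : MvPowerSeries (Fin 2) B)
    (hF : IsFGL F) (hG : IsFGL G) (φ : A →+* B) (γ : PowerSeries B)
    (hhom : IsFGLHom F G φ γ)
    (h1 : PowerSeries.coeff 1 γ = 0) (hγ : γ ≠ 0) :
    ∃ r : ℕ, 1 < r ∧ (∀ m < r, PowerSeries.coeff m γ = 0) ∧
      PowerSeries.coeff r γ ≠ 0 ∧
      ((Finset.Ioo 0 r).gcd fun i => r.choose i) • PowerSeries.coeff r γ = 0 :=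
  stmt4_general F G hG φ γ hhom h1 hγ
end
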